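/- arXiv:math/0409599 — 3 statements merged into one kernel-verified Lean document; each statement's English description precedes it below -/
import Mathlib

section
/- In a weak bialgebra H over a commutative ring, Δ(1) lies in H_s ⊗ H_t, the image of the tensor product of the source space and the target space in H ⊗ H. -/
open TensorProduct

structure WeakBialgebra (k H : Type*) [CommRing k] [Ring H] [Algebra k H] where
  comul : H →ₗ[k] H ⊗[k] H
  counit : H →ₗ[k] k
  coassoc : ∀ h : H, (TensorProduct.assoc k H H H) ((comul.rTensor H) (comul h)) =
      (comul.lTensor H) (comul h)
  counit_left : ∀ h : H, (TensorProduct.lid k H) ((counit.rTensor H) (comul h)) = h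
  counit_right : ∀ h : H, (TensorProduct.rid k H) ((counit.lTensor H) (comul h)) = h
  comul_mul : ∀ h g : H, comul (h * g) = comul h * comul g
  weak_unit_left : (comul.lTensor H) (comul 1) =
      (Algebra.TensorProduct.map (AlgHom.id k H)
        (Algebra.TensorProduct.includeLeft : H →ₐ[k] H ⊗[k] H)) (comul 1) *
      (Algebra.TensorProduct.includeRight : (H ⊗[k] H) →ₐ[k] H ⊗[k] (H ⊗[k] H)) (comul 1)
  weak_unit_right : (comul.lTensor H) (comul 1) =
      (Algebra.TensorProduct.includeRight : (H ⊗[k] H) →ₐ[k] H ⊗[k] (H ⊗[k] H)) (comul 1) *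
      (Algebra.TensorProduct.map (AlgHom.id k H)
        (Algebra.TensorProduct.includeLeft : H →ₐ[k] H ⊗[k] H)) (comul 1)
  weak_counit₁ : ∀ h g l : H, counit (h * g * l) =
      (LinearMap.mul' k k) ((TensorProduct.map counit counit)
        ((h ⊗ₜ[k] (1 : H)) * comul g * ((1 : H) ⊗ₜ[k] l)))
  weak_counit₂ : ∀ h g l : H, counit (h * g * l) =
      (LinearMap.mul' k k) ((TensorProduct.map counit counit)
        ((h ⊗ₜ[k] (1 : H)) * (TensorProduct.comm k H H) (comul g) * ((1 : H) ⊗ₜ[k] l)))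

namespace WeakBialgebra

variable {k H : Type*} [CommRing k] [Ring H] [Algebra k H] (W : WeakBialgebra k H)

/-- The target map `ε_t(h) = ε(1_{(1)}h)1_{(2)}`. -/
noncomputable def εt : H →ₗ[k] H :=
  (TensorProduct.lid k H).toLinearMap ∘ₗ (W.counit.rTensor H) ∘ₗ
    (LinearMap.mulLeft k (W.comul 1)) ∘ₗ
    (Algebra.TensorProduct.includeLeft : H →ₐ[k] H ⊗[k] H).toLinearMap

/-- The source map `ε_s(h) = 1_{(1)}ε(h1_{(2)})`. -/
noncomputable def εs : H →ₗ[k] H :=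
  (TensorProduct.rid k H).toLinearMap ∘ₗ (W.counit.lTensor H) ∘ₗ
    (LinearMap.mulRight k (W.comul 1)) ∘ₗ
    (Algebra.TensorProduct.includeRight : H →ₐ[k] H ⊗[k] H).toLinearMap

/-- `ε̄_t(h) = ε(h1_{(1)})1_{(2)}`. -/
noncomputable def εt' : H →ₗ[k] H :=
  (TensorProduct.lid k H).toLinearMap ∘ₗ (W.counit.rTensor H) ∘ₗ
    (LinearMap.mulRight k (W.comul 1)) ∘ₗ
    (Algebra.TensorProduct.includeLeft : H →ₐ[k] H ⊗[k] H).toLinearMap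

/-- `ε̄_s(h) = ε(1_{(2)}h)1_{(1)}`. -/
noncomputable def εs' : H →ₗ[k] H :=
  (TensorProduct.rid k H).toLinearMap ∘ₗ (W.counit.lTensor H) ∘ₗ
    (LinearMap.mulLeft k (W.comul 1)) ∘ₗ
    (Algebra.TensorProduct.includeRight : H →ₐ[k] H ⊗[k] H).toLinearMap

end WeakBialgebra

/-- A weak Hopf algebra: a weak bialgebra with an antipode. -/
structure WeakHopf (k H : Type*) [CommRing k] [Ring H] [Algebra k H] where
  W : WeakBialgebra k H
  S : H →ₗ[k] H
  S_conv_id : ∀ h : H, (LinearMap.mul' k H) ((S.rTensor H) (W.comul h)) = W.εs h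
  id_conv_S : ∀ h : H, (LinearMap.mul' k H) ((S.lTensor H) (W.comul h)) = W.εt h
  S_conv_id_conv_S : ∀ h : H, (LinearMap.mul' k H) ((LinearMap.lTensor H (LinearMap.mul' k H))
      ((TensorProduct.map S (TensorProduct.map LinearMap.id S))
        ((W.comul.lTensor H) (W.comul h)))) = S h

/-! Writing `Δ(1) = ∑ p₁ ⊗ p₂`, applying `id ⊗ ε ⊗ id` to `Δ²(1) = (1 ⊗ Δ(1))(Δ(1) ⊗ 1)` gives
`Δ(1) = ∑ ε(q₁ p₂) p₁ ⊗ q₂`. Read through `ε_s(c) = ∑ ε(c p₂) p₁` and `ε_t(b) = ∑ ε(q₁ b) q₂`,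
this says both `(ε_s ⊗ id)Δ(1) = Δ(1)` and `(id ⊗ ε_t)Δ(1) = Δ(1)`, so `Δ(1) = (ε_s ⊗ ε_t)Δ(1)`. -/

namespace WeakBialgebra

variable {k H : Type*} [CommRing k] [Ring H] [Algebra k H] (W : WeakBialgebra k H)

section FiniteSum

variable {W} {s : Finset (H × H)}

theorem εs_apply_eq_sum (hs : W.comul 1 = ∑ p ∈ s, p.1 ⊗ₜ[k] p.2) (c : H) :
    W.εs c = ∑ p ∈ s, W.counit (c * p.2) • p.1 := by
  simp [εs, hs, Finset.mul_sum]

theorem εt_apply_eq_sum (hs : W.comul 1 = ∑ p ∈ s, p.1 ⊗ₜ[k] p.2) (b : H) :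
    W.εt b = ∑ q ∈ s, W.counit (q.1 * b) • q.2 := by
  simp [εt, hs, Finset.sum_mul]

theorem comul_one_eq_sum_counit_mul (hs : W.comul 1 = ∑ p ∈ s, p.1 ⊗ₜ[k] p.2) :
    W.comul 1 = ∑ q ∈ s, ∑ p ∈ s, W.counit (q.1 * p.2) • (p.1 ⊗ₜ[k] q.2) := by
  have h := congrArg (LinearMap.lTensor H ((TensorProduct.lid k H).toLinearMap ∘ₗ
    W.counit.rTensor H)) W.weak_unit_right
  have hcounit : ((TensorProduct.lid k H).toLinearMap ∘ₗ W.counit.rTensor H) ∘ₗ W.comul =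
      LinearMap.id := LinearMap.ext W.counit_left
  rw [← LinearMap.comp_apply, ← LinearMap.lTensor_comp, hcounit, LinearMap.lTensor_id,
    LinearMap.id_apply] at h
  rw [h]
  simp [hs, Finset.sum_mul_sum]

end FiniteSum

theorem rTensor_εs_comul_one : W.εs.rTensor H (W.comul 1) = W.comul 1 := by
  obtain ⟨s, hs⟩ := TensorProduct.exists_finset (W.comul 1)
  conv_lhs => rw [hs]
  rw [comul_one_eq_sum_counit_mul hs]
  simp [εs_apply_eq_sum hs, TensorProduct.sum_tmul, TensorProduct.smul_tmul']

theorem lTensor_εt_comul_one : W.εt.lTensor H (W.comul 1) = W.comul 1 := by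
  obtain ⟨s, hs⟩ := TensorProduct.exists_finset (W.comul 1)
  conv_lhs => rw [hs]
  rw [comul_one_eq_sum_counit_mul hs, Finset.sum_comm]
  simp [εt_apply_eq_sum hs, TensorProduct.tmul_sum]

theorem map_εs_εt_comul_one : TensorProduct.map W.εs W.εt (W.comul 1) = W.comul 1 := by
  rw [← LinearMap.lTensor_comp_rTensor, LinearMap.comp_apply, rTensor_εs_comul_one,
    lTensor_εt_comul_one]

end WeakBialgebra

/-- `Δ(1)` lies in the image of `H_s ⊗ H_t` in `H ⊗ H`. -/
theorem weakBialgebra_comul_one_mem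
    {k H : Type*} [CommRing k] [Ring H] [Algebra k H] (W : WeakBialgebra k H) :
    W.comul 1 ∈ LinearMap.range
      (TensorProduct.map (LinearMap.range W.εs).subtype (LinearMap.range W.εt).subtype) := by
  rw [← W.map_εs_εt_comul_one, ← TensorProduct.mapIncl, TensorProduct.range_mapIncl,
    ← TensorProduct.range_map]
  exact LinearMap.mem_range_self _ _
end

section
/- In a weak bialgebra H, the target space can be characterized as H_t = {h ∈ H | Δ(h) = 1_{(1)}h ⊗ 1_{(2)}}, and the source space as H_s = {h ∈ H | Δ(h) = 1_{(1)} ⊗ h1_{(2)}}. -/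
open TensorProduct

/-! Since `ε_t h = (ε(· h) ⊗ id)(Δ1)`, applying `Δ` and the axiom `Δ²(1) = (1 ⊗ Δ1)(Δ1 ⊗ 1)`
gives `Δ(ε_t h) = Δ1 (ε_t h ⊗ 1)`. Conversely, if `Δh = Δ1 (h ⊗ 1)`, then applying `ε ⊗ id`
yields `h = ε(1₍₁₎h)1₍₂₎ = ε_t h`. The source case is the mirror image, reading `(Δ ⊗ id)Δ1`
off `Δ²(1)` by coassociativity. -/

namespace TensorProduct

open LinearMap Algebra.TensorProduct

variable {k A B C : Type*} [CommSemiring k]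

theorem lid_rTensor_lTensor {M N P : Type*} [AddCommMonoid M] [AddCommMonoid N]
    [AddCommMonoid P] [Module k M] [Module k N] [Module k P]
    (f : M →ₗ[k] k) (g : N →ₗ[k] P) (u : M ⊗[k] N) :
    TensorProduct.lid k P (f.rTensor P (g.lTensor M u)) =
      g (TensorProduct.lid k N (f.rTensor N u)) := by
  induction u using TensorProduct.induction_on with
  | zero => simp
  | tmul m n => simp
  | add x y hx hy => simp only [map_add, hx, hy]

theorem rid_lTensor_rTensor {M N P : Type*} [AddCommMonoid M] [AddCommMonoid N]
    [AddCommMonoid P] [Module k M] [Module k N] [Module k P]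
    (f : N →ₗ[k] k) (g : M →ₗ[k] P) (u : M ⊗[k] N) :
    TensorProduct.rid k P (f.lTensor P (g.rTensor N u)) =
      g (TensorProduct.rid k M (f.lTensor M u)) := by
  induction u using TensorProduct.induction_on with
  | zero => simp
  | tmul m n => simp
  | add x y hx hy => simp only [map_add, hx, hy]

variable [Semiring A] [Semiring B] [Semiring C] [Algebra k A] [Algebra k B] [Algebra k C]

theorem rTensor_comp_mulRight (f : A →ₗ[k] k) (a : A) (u : A ⊗[k] B) :
    (f ∘ₗ mulRight k a).rTensor B u = f.rTensor B (u * (a ⊗ₜ 1)) := by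
  induction u using TensorProduct.induction_on with
  | zero => simp
  | tmul x y => simp [tmul_mul_tmul]
  | add x y hx hy => simp only [map_add, add_mul, hx, hy]

theorem lTensor_comp_mulLeft (f : B →ₗ[k] k) (b : B) (u : A ⊗[k] B) :
    (f ∘ₗ mulLeft k b).lTensor A u = f.lTensor A ((1 ⊗ₜ b) * u) := by
  induction u using TensorProduct.induction_on with
  | zero => simp
  | tmul x y => simp [tmul_mul_tmul]
  | add x y hx hy => simp only [map_add, mul_add, hx, hy]

-- The tensor `includeRight v * map id includeLeft u` is `(1 ⊗ v)(u ⊗ 1)`, the shape of `Δ²(1)`.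
theorem lid_rTensor_includeRight_mul_map_includeLeft (f : A →ₗ[k] k) (u : A ⊗[k] B)
    (v : B ⊗[k] C) :
    TensorProduct.lid k (B ⊗[k] C) (f.rTensor (B ⊗[k] C)
        ((includeRight : B ⊗[k] C →ₐ[k] A ⊗[k] (B ⊗[k] C)) v *
          Algebra.TensorProduct.map (AlgHom.id k A) (includeLeft : B →ₐ[k] B ⊗[k] C) u)) =
      v * (TensorProduct.lid k B (f.rTensor B u) ⊗ₜ 1) := by
  induction u using TensorProduct.induction_on with
  | zero => simp
  | tmul a b =>
    simp only [includeRight_apply, Algebra.TensorProduct.map_tmul, AlgHom.coe_id, id_eq,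
      includeLeft_apply, tmul_mul_tmul, one_mul, rTensor_tmul, TensorProduct.lid_tmul]
    rw [← TensorProduct.smul_tmul', mul_smul_comm]
  | add x y hx hy => simp only [map_add, mul_add, TensorProduct.add_tmul, hx, hy]

theorem rid_lTensor_assoc_symm_includeRight_mul_map_includeLeft (f : C →ₗ[k] k)
    (u : A ⊗[k] B) (v : B ⊗[k] C) :
    TensorProduct.rid k (A ⊗[k] B) (f.lTensor (A ⊗[k] B) ((TensorProduct.assoc k A B C).symm
        ((includeRight : B ⊗[k] C →ₐ[k] A ⊗[k] (B ⊗[k] C)) v *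
          Algebra.TensorProduct.map (AlgHom.id k A) (includeLeft : B →ₐ[k] B ⊗[k] C) u))) =
      (1 ⊗ₜ TensorProduct.rid k B (f.lTensor B v)) * u := by
  induction u using TensorProduct.induction_on with
  | zero => simp
  | tmul a b =>
    induction v using TensorProduct.induction_on with
    | zero => simp
    | tmul c d =>
      simp only [includeRight_apply, Algebra.TensorProduct.map_tmul, AlgHom.coe_id, id_eq,
        includeLeft_apply, tmul_mul_tmul, one_mul, mul_one, TensorProduct.assoc_symm_tmul,
        lTensor_tmul, TensorProduct.rid_tmul]
      rw [smul_mul_assoc, TensorProduct.tmul_smul, TensorProduct.smul_tmul']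
    | add x y hx hy => simp only [map_add, add_mul, TensorProduct.tmul_add, hx, hy]
  | add x y hx hy => simp only [map_add, mul_add, hx, hy]

end TensorProduct

namespace WeakBialgebra

variable {k H : Type*} [CommRing k] [Ring H] [Algebra k H] (W : WeakBialgebra k H)

theorem εt_apply (h : H) :
    W.εt h =
      TensorProduct.lid k H ((W.counit ∘ₗ LinearMap.mulRight k h).rTensor H (W.comul 1)) := by
  simp [εt, rTensor_comp_mulRight]

theorem εs_apply (h : H) :
    W.εs h =
      TensorProduct.rid k H ((W.counit ∘ₗ LinearMap.mulLeft k h).lTensor H (W.comul 1)) := by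
  simp [εs, lTensor_comp_mulLeft]

theorem comul_εt (h : H) : W.comul (W.εt h) = W.comul 1 * (W.εt h ⊗ₜ 1) := by
  rw [εt_apply, ← lid_rTensor_lTensor, W.weak_unit_right,
    lid_rTensor_includeRight_mul_map_includeLeft]

theorem comul_εs (h : H) : W.comul (W.εs h) = (1 ⊗ₜ W.εs h) * W.comul 1 := by
  have coassoc_one : W.comul.rTensor H (W.comul 1) =
      (TensorProduct.assoc k H H H).symm (W.comul.lTensor H (W.comul 1)) :=
    (LinearEquiv.eq_symm_apply _).mpr (W.coassoc 1)
  rw [εs_apply, ← rid_lTensor_rTensor, coassoc_one, W.weak_unit_right,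
    rid_lTensor_assoc_symm_includeRight_mul_map_includeLeft]

theorem εt_eq_self_of_comul_eq {h : H} (hh : W.comul h = W.comul 1 * (h ⊗ₜ 1)) :
    W.εt h = h := by
  rw [εt_apply, rTensor_comp_mulRight, ← hh, W.counit_left]

theorem εs_eq_self_of_comul_eq {h : H} (hh : W.comul h = (1 ⊗ₜ h) * W.comul 1) :
    W.εs h = h := by
  rw [εs_apply, lTensor_comp_mulLeft, ← hh, W.counit_right]

end WeakBialgebra

/-- Characterization of the target and source spaces:
`H_t = {h | Δ(h) = 1₍₁₎h ⊗ 1₍₂₎}` and `H_s = {h | Δ(h) = 1₍₁₎ ⊗ h1₍₂₎}`. -/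
theorem weakBialgebra_target_source_characterization
    {k H : Type*} [CommRing k] [Ring H] [Algebra k H] (W : WeakBialgebra k H) :
    Set.range W.εt = {h : H | W.comul h = W.comul 1 * (h ⊗ₜ[k] (1 : H))} ∧
    Set.range W.εs = {h : H | W.comul h = ((1 : H) ⊗ₜ[k] h) * W.comul 1} := by
  refine ⟨Set.ext fun h => ⟨?_, fun hh => ⟨h, W.εt_eq_self_of_comul_eq hh⟩⟩,
    Set.ext fun h => ⟨?_, fun hh => ⟨h, W.εs_eq_self_of_comul_eq hh⟩⟩⟩
  · rintro ⟨g, rfl⟩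
    exact W.comul_εt g
  · rintro ⟨g, rfl⟩
    exact W.comul_εs g
end

section
/- Let H be a weak Hopf algebra and M a k-module with a left H-action and left H-coaction λ. Then M is a left-left Yetter-Drinfeld module (i.e., λ(m) ∈ Δ(1)(H⊗M) and h_{(1)}m_{[-1]} ⊗ h_{(2)}m_{[0]} = (h_{(1)}m)_{[-1]}h_{(2)} ⊗ (h_{(1)}m)_{[0]} for all h, m) if and only if λ(hm) = h_{(1)}m_{[-1]}S(h_{(3)}) ⊗ h_{(2)}m_{[0]} for all h ∈ H, m ∈ M. -/
open TensorProduct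
set_option linter.unusedSectionVars false
set_option linter.unusedVariables false
set_option maxHeartbeats 1000000

section Modules

variable {k H M : Type*} [CommRing k] [Ring H] [Algebra k H]
  [AddCommGroup M] [Module k M] [Module H M] [IsScalarTower k H M]

/-- The `k`-linear endomorphism of `M` given by the action of `b : H`. -/
def lsmulM (b : H) : M →ₗ[k] M where
  toFun m := b • m
  map_add' := smul_add b
  map_smul' c m := by
    simp only [RingHom.id_apply]
    rw [← algebraMap_smul H c m, ← algebraMap_smul H c (b • m), smul_smul, smul_smul,
      Algebra.commutes]

/-- The action `H →ₗ[k] End(M)` as a bundled linear map. -/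
def lsmulL : H →ₗ[k] M →ₗ[k] M where
  toFun := lsmulM
  map_add' b b' := by ext m; simp [lsmulM, add_smul]
  map_smul' c b := by ext m; simp [lsmulM, smul_assoc]

end Modules


section Reps
variable {k : Type*} [CommRing k] {P Q R : Type*} [AddCommGroup P] [Module k P]
  [AddCommGroup Q] [Module k Q] [AddCommGroup R] [Module k R]

theorem exists_rep2 (z : P ⊗[k] Q) : ∃ (n : ℕ) (p : Fin n → P) (q : Fin n → Q),
    z = ∑ i, p i ⊗ₜ[k] q i := by
  induction z with
  | zero => exact ⟨0, ![], ![], by simp⟩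
  | tmul x y => exact ⟨1, ![x], ![y], by simp⟩
  | add a b ha hb =>
    obtain ⟨n, p, q, rfl⟩ := ha; obtain ⟨m, r, s, rfl⟩ := hb
    refine ⟨n + m, Fin.append p r, Fin.append q s, ?_⟩
    rw [Fin.sum_univ_add]
    simp [Fin.append_left, Fin.append_right]

theorem exists_rep3 (z : (P ⊗[k] Q) ⊗[k] R) :
    ∃ (n : ℕ) (p : Fin n → P) (q : Fin n → Q) (r : Fin n → R),
    z = ∑ i, (p i ⊗ₜ[k] q i) ⊗ₜ[k] r i := by
  induction z with
  | zero => exact ⟨0, ![], ![], ![], by simp⟩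
  | tmul x y =>
    obtain ⟨n, p, q, rfl⟩ := exists_rep2 x
    exact ⟨n, p, q, fun _ => y, by rw [sum_tmul]⟩
  | add a b ha hb =>
    obtain ⟨n, p, q, r, rfl⟩ := ha; obtain ⟨m, p', q', r', rfl⟩ := hb
    refine ⟨n + m, Fin.append p p', Fin.append q q', Fin.append r r', ?_⟩
    rw [Fin.sum_univ_add]
    simp [Fin.append_left, Fin.append_right]

end Reps


namespace WeakBialgebra

variable {k H : Type*} [CommRing k] [Ring H] [Algebra k H] (W : WeakBialgebra k H)

section Elem

variable {ι ι' : Type*} {t : Finset ι} {t' : Finset ι'} {a b : ι → H} {c d : ι' → H}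
  {g h : H}

theorem counitR_E (hr : W.comul h = ∑ i ∈ t, a i ⊗ₜ[k] b i) :
    ∑ i ∈ t, W.counit (b i) • a i = h := by
  have := W.counit_right h
  rw [hr, map_sum, map_sum] at this
  simpa using this

theorem counitL_E (hr : W.comul h = ∑ i ∈ t, a i ⊗ₜ[k] b i) :
    ∑ i ∈ t, W.counit (a i) • b i = h := by
  have := W.counit_left h
  rw [hr, map_sum, map_sum] at this
  simpa using this

theorem wc1_E (hr : W.comul g = ∑ i ∈ t, a i ⊗ₜ[k] b i) (f l : H) :
    W.counit (f * g * l) = ∑ i ∈ t, W.counit (f * a i) * W.counit (b i * l) := by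
  have := W.weak_counit₁ f g l
  rw [hr] at this
  rw [this, Finset.mul_sum, Finset.sum_mul, map_sum, map_sum]
  congr 1; ext i
  simp [Algebra.TensorProduct.tmul_mul_tmul]

-- comul of product, as double sum
theorem comul_mul_E (hx : W.comul g = ∑ i ∈ t, a i ⊗ₜ[k] b i)
    (hy : W.comul h = ∑ i ∈ t', c i ⊗ₜ[k] d i) :
    W.comul (g * h) = ∑ i ∈ t, ∑ j ∈ t', (a i * c j) ⊗ₜ[k] (b i * d j) := by
  rw [W.comul_mul, hx, hy, Finset.sum_mul_sum]
  simp [Algebra.TensorProduct.tmul_mul_tmul]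

-- L8: counit fusion for products
theorem counit_fuse (hx : W.comul g = ∑ i ∈ t, a i ⊗ₜ[k] b i)
    (hy : W.comul h = ∑ i ∈ t', c i ⊗ₜ[k] d i) :
    ∑ i ∈ t, ∑ j ∈ t', W.counit (b i * d j) • (a i * c j) = g * h := by
  have h2 := W.comul_mul_E hx hy
  rw [← Finset.sum_product'] at h2 ⊢
  exact counitR_E W h2


theorem εt_apply_s15 (hone : W.comul 1 = ∑ i ∈ t', c i ⊗ₜ[k] d i) (g : H) :
    W.εt g = ∑ i ∈ t', W.counit (c i * g) • d i := by
  simp only [εt, LinearMap.coe_comp, Function.comp_apply, LinearEquiv.coe_coe, AlgHom.toLinearMap_apply,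
    Algebra.TensorProduct.includeLeft_apply, LinearMap.mulLeft_apply]
  rw [hone, Finset.sum_mul, map_sum, map_sum]
  congr 1; ext i
  simp [Algebra.TensorProduct.tmul_mul_tmul]

theorem εs_apply_s15 (hone : W.comul 1 = ∑ i ∈ t', c i ⊗ₜ[k] d i) (g : H) :
    W.εs g = ∑ i ∈ t', W.counit (g * d i) • c i := by
  simp only [εs, LinearMap.coe_comp, Function.comp_apply, LinearEquiv.coe_coe, AlgHom.toLinearMap_apply,
    Algebra.TensorProduct.includeRight_apply, LinearMap.mulRight_apply]
  rw [hone, Finset.mul_sum, map_sum, map_sum]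
  congr 1; ext i
  simp [Algebra.TensorProduct.tmul_mul_tmul]

/-- WUL elementwise. -/
theorem WUL_E (hone : W.comul 1 = ∑ i ∈ t', c i ⊗ₜ[k] d i) :
    (W.comul.lTensor H) (W.comul 1) =
      ∑ i ∈ t', ∑ j ∈ t', c i ⊗ₜ[k] ((d i * c j) ⊗ₜ[k] d j) := by
  rw [W.weak_unit_left, hone, map_sum, map_sum, Finset.sum_mul_sum]
  refine Finset.sum_congr rfl fun i _ => Finset.sum_congr rfl fun j _ => ?_
  simp [Algebra.TensorProduct.tmul_mul_tmul]

/-- WUR elementwise. -/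
theorem WUR_E (hone : W.comul 1 = ∑ i ∈ t', c i ⊗ₜ[k] d i) :
    (W.comul.lTensor H) (W.comul 1) =
      ∑ i ∈ t', ∑ j ∈ t', c j ⊗ₜ[k] ((c i * d j) ⊗ₜ[k] d i) := by
  rw [W.weak_unit_right, hone, map_sum, map_sum, Finset.sum_mul_sum]
  refine Finset.sum_congr rfl fun i _ => Finset.sum_congr rfl fun j _ => ?_
  simp [Algebra.TensorProduct.tmul_mul_tmul]

/-- `(Δ ⊗ id)Δ(1)` in WUL form. -/
theorem C3L (hone : W.comul 1 = ∑ i ∈ t', c i ⊗ₜ[k] d i) :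
    (W.comul.rTensor H) (W.comul 1) =
      ∑ i ∈ t', ∑ j ∈ t', (c i ⊗ₜ[k] (d i * c j)) ⊗ₜ[k] d j := by
  apply (TensorProduct.assoc k H H H).injective
  rw [W.coassoc 1, W.WUL_E hone]
  simp only [map_sum, TensorProduct.assoc_tmul]

/-- `(Δ ⊗ id)Δ(1)` in WUR form. -/
theorem C3R (hone : W.comul 1 = ∑ i ∈ t', c i ⊗ₜ[k] d i) :
    (W.comul.rTensor H) (W.comul 1) =
      ∑ i ∈ t', ∑ j ∈ t', (c j ⊗ₜ[k] (c i * d j)) ⊗ₜ[k] d i := by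
  apply (TensorProduct.assoc k H H H).injective
  rw [W.coassoc 1, W.WUR_E hone]
  simp only [map_sum, TensorProduct.assoc_tmul]

/-- Coassociativity elementwise: switching bracketing of a rep of `(Δ⊗id)Δh`. -/
theorem coassoc_E (hr : W.comul h = ∑ i ∈ t, a i ⊗ₜ[k] b i)
    {m : ι → ℕ} {c' d' : (i : ι) → Fin (m i) → H}
    (hb : ∀ i ∈ t, W.comul (b i) = ∑ w, c' i w ⊗ₜ[k] d' i w) :
    ∑ i ∈ t, (W.comul (a i)) ⊗ₜ[k] b i =
      ∑ i ∈ t, ∑ w, (a i ⊗ₜ[k] c' i w) ⊗ₜ[k] d' i w := by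
  apply (TensorProduct.assoc k H H H).injective
  have h1 : (TensorProduct.assoc k H H H) ((W.comul.rTensor H) (W.comul h)) =
      (W.comul.lTensor H) (W.comul h) := W.coassoc h
  rw [hr] at h1
  simp only [map_sum, LinearMap.rTensor_tmul, LinearMap.lTensor_tmul] at h1
  simp only [map_sum]
  rw [h1]
  refine Finset.sum_congr rfl fun i hi => ?_
  rw [hb i hi, tmul_sum]
  simp [TensorProduct.assoc_tmul]

end Elem

end WeakBialgebra


namespace WeakBialgebra

variable {k H : Type*} [CommRing k] [Ring H] [Algebra k H]

/-- Contraction gadget: `x ⊗ y ↦ φ(x) • y`. -/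
noncomputable def contractθ (φ : H →ₗ[k] k) : H ⊗[k] H →ₗ[k] H :=
  (TensorProduct.lid k H).toLinearMap ∘ₗ (φ.rTensor H)

@[simp] theorem contractθ_tmul (φ : H →ₗ[k] k) (x y : H) :
    contractθ φ (x ⊗ₜ[k] y) = φ x • y := rfl

variable (W : WeakBialgebra k H)

section Ident

variable {ι ι' : Type*} {s : Finset ι} {t : Finset ι'} {u v : ι → H} {a b : ι' → H} {h : H}

/-- `(id ⊗ εt)Δh = Δ(1)(h ⊗ 1)`, elementwise. -/
theorem I1 (hone : W.comul 1 = ∑ i ∈ s, u i ⊗ₜ[k] v i)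
    (hr : W.comul h = ∑ j ∈ t, a j ⊗ₜ[k] b j) :
    ∑ j ∈ t, a j ⊗ₜ[k] W.εt (b j) = ∑ i ∈ s, (u i * h) ⊗ₜ[k] v i := by
  classical
  choose n c d hcd using fun i : ι => exists_rep2 (W.comul (u i))
  have hprod : W.comul h = ∑ i ∈ s, ∑ j ∈ t, (u i * a j) ⊗ₜ[k] (v i * b j) := by
    have := W.comul_mul_E hone hr
    rwa [one_mul] at this
  set Θ : H ⊗[k] (H ⊗[k] H) →ₗ[k] H ⊗[k] H :=
    ∑ j ∈ t, TensorProduct.map (LinearMap.mulRight k (a j))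
      (contractθ (W.counit ∘ₗ LinearMap.mulRight k (b j))) with hΘ
  have Θtmul : ∀ (x y z : H), Θ (x ⊗ₜ[k] (y ⊗ₜ[k] z)) =
      ∑ j ∈ t, (x * a j) ⊗ₜ[k] (W.counit (y * b j) • z) := by
    intro x y z
    rw [hΘ, LinearMap.sum_apply]
    simp
  have e1 : Θ ((W.comul.lTensor H) (W.comul 1)) = ∑ j ∈ t, a j ⊗ₜ[k] W.εt (b j) := by
    rw [W.WUR_E hone]
    rw [map_sum]
    simp only [map_sum, Θtmul]
    have rhs : ∑ j ∈ t, a j ⊗ₜ[k] W.εt (b j) =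
        ∑ i ∈ s, ∑ p ∈ s, ∑ j ∈ t, (u p * a j) ⊗ₜ[k] (W.counit (u i * v p * b j) • v i) := by
      have lhs1 : ∑ j ∈ t, a j ⊗ₜ[k] W.εt (b j) = (W.εt.lTensor H) (W.comul h) := by
        rw [hr, map_sum]; simp
      rw [lhs1, hprod, map_sum]
      simp only [map_sum, LinearMap.lTensor_tmul]
      conv_rhs => rw [Finset.sum_comm]
      refine Finset.sum_congr rfl fun p _ => ?_
      conv_rhs => rw [Finset.sum_comm]
      refine Finset.sum_congr rfl fun j _ => ?_
      rw [W.εt_apply_s15 hone, tmul_sum]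
      refine Finset.sum_congr rfl fun i _ => ?_
      rw [mul_assoc]
    rw [rhs]
  have e2 : Θ ((W.comul.lTensor H) (W.comul 1)) = ∑ i ∈ s, (u i * h) ⊗ₜ[k] v i := by
    rw [← W.coassoc 1]
    have hY : (W.comul.rTensor H) (W.comul 1) =
        ∑ i ∈ s, ∑ w, (c i w ⊗ₜ[k] d i w) ⊗ₜ[k] v i := by
      rw [hone, map_sum]
      refine Finset.sum_congr rfl fun i _ => ?_
      rw [LinearMap.rTensor_tmul, hcd i, sum_tmul]
    rw [hY, map_sum]
    simp only [map_sum, TensorProduct.assoc_tmul, Θtmul]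
    refine Finset.sum_congr rfl fun i _ => ?_
    have fuse := W.counit_fuse (hcd i) hr
    calc ∑ w, ∑ j ∈ t, (c i w * a j) ⊗ₜ[k] (W.counit (d i w * b j) • v i)
        = ∑ w, ∑ j ∈ t, (W.counit (d i w * b j) • (c i w * a j)) ⊗ₜ[k] v i := by
          refine Finset.sum_congr rfl fun w _ => Finset.sum_congr rfl fun j _ => ?_
          rw [tmul_smul, smul_tmul']
      _ = (∑ w, ∑ j ∈ t, W.counit (d i w * b j) • (c i w * a j)) ⊗ₜ[k] v i := by
          rw [sum_tmul]
          refine Finset.sum_congr rfl fun w _ => ?_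
          rw [sum_tmul]
      _ = (u i * h) ⊗ₜ[k] v i := by rw [fuse]
  rw [← e1, e2]


/-- `(id ⊗ εs)Δh = ∑ h·1₍₁₎ ⊗ εs(1₍₂₎)`, elementwise. -/
theorem I3 (hone : W.comul 1 = ∑ i ∈ s, u i ⊗ₜ[k] v i)
    (hr : W.comul h = ∑ j ∈ t, a j ⊗ₜ[k] b j) :
    ∑ j ∈ t, a j ⊗ₜ[k] W.εs (b j) = ∑ i ∈ s, (h * u i) ⊗ₜ[k] W.εs (v i) := by
  classical
  choose n c d hcd using fun i : ι => exists_rep2 (W.comul (v i))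
  choose n' c' d' hcd' using fun i : ι => exists_rep2 (W.comul (u i))
  have hprod : W.comul h = ∑ j ∈ t, ∑ i ∈ s, (a j * u i) ⊗ₜ[k] (b j * v i) := by
    have := W.comul_mul_E hr hone
    rwa [mul_one] at this
  set Θ : H ⊗[k] (H ⊗[k] H) →ₗ[k] H ⊗[k] H :=
    ∑ j ∈ t, TensorProduct.map (LinearMap.mulLeft k (a j))
      (W.εs ∘ₗ contractθ (W.counit ∘ₗ LinearMap.mulLeft k (b j))) with hΘ
  have Θtmul : ∀ (x y z : H), Θ (x ⊗ₜ[k] (y ⊗ₜ[k] z)) =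
      ∑ j ∈ t, W.counit (b j * y) • ((a j * x) ⊗ₜ[k] W.εs z) := by
    intro x y z
    rw [hΘ, LinearMap.sum_apply]
    refine Finset.sum_congr rfl fun j _ => ?_
    simp [tmul_smul]
  have hLT : (W.comul.lTensor H) (W.comul 1) =
      ∑ i ∈ s, ∑ w, u i ⊗ₜ[k] (c i w ⊗ₜ[k] d i w) := by
    rw [hone, map_sum]
    refine Finset.sum_congr rfl fun i _ => ?_
    rw [LinearMap.lTensor_tmul, hcd i, tmul_sum]
  have e1 : Θ ((W.comul.lTensor H) (W.comul 1)) = ∑ j ∈ t, a j ⊗ₜ[k] W.εs (b j) := by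
    rw [hLT]
    simp only [map_sum, Θtmul]
    have rhs : ∑ j ∈ t, a j ⊗ₜ[k] W.εs (b j) =
        ∑ i ∈ s, ∑ w, ∑ j ∈ t,
          W.counit (b j * c i w) • ((a j * u i) ⊗ₜ[k] W.εs (d i w)) := by
      have lhs1 : ∑ j ∈ t, a j ⊗ₜ[k] W.εs (b j) = (W.εs.lTensor H) (W.comul h) := by
        rw [hr, map_sum]; simp
      rw [lhs1, hprod, map_sum]
      simp only [map_sum, LinearMap.lTensor_tmul]
      conv_lhs => rw [Finset.sum_comm]
      refine Finset.sum_congr rfl fun i _ => ?_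
      conv_rhs => rw [Finset.sum_comm]
      refine Finset.sum_congr rfl fun j _ => ?_
      rw [W.εs_apply_s15 hone]
      have expand : ∀ p, W.counit (b j * v i * v p) =
          ∑ w, W.counit (b j * c i w) * W.counit (d i w * v p) :=
        fun p => W.wc1_E (hcd i) (b j) (v p)
      calc (a j * u i) ⊗ₜ[k] (∑ p ∈ s, W.counit (b j * v i * v p) • u p)
          = (a j * u i) ⊗ₜ[k] (∑ w, W.counit (b j * c i w) •
              (∑ p ∈ s, W.counit (d i w * v p) • u p)) := by
            congr 1
            have hsw : ∀ w, W.counit (b j * c i w) • (∑ p ∈ s, W.counit (d i w * v p) • u p)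
                = ∑ p ∈ s, (W.counit (b j * c i w) * W.counit (d i w * v p)) • u p := by
              intro w; rw [Finset.smul_sum]; simp [smul_smul]
            simp only [hsw]
            conv_rhs => rw [Finset.sum_comm]
            refine Finset.sum_congr rfl fun p _ => ?_
            rw [expand p, Finset.sum_smul]
        _ = ∑ w, W.counit (b j * c i w) • ((a j * u i) ⊗ₜ[k] W.εs (d i w)) := by
            rw [tmul_sum]
            refine Finset.sum_congr rfl fun w _ => ?_
            rw [tmul_smul, W.εs_apply_s15 hone]
    rw [rhs]
  have e2 : Θ ((W.comul.lTensor H) (W.comul 1)) =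
      ∑ i ∈ s, (h * u i) ⊗ₜ[k] W.εs (v i) := by
    rw [← W.coassoc 1]
    have hY : (W.comul.rTensor H) (W.comul 1) =
        ∑ i ∈ s, ∑ w, (c' i w ⊗ₜ[k] d' i w) ⊗ₜ[k] v i := by
      rw [hone, map_sum]
      refine Finset.sum_congr rfl fun i _ => ?_
      rw [LinearMap.rTensor_tmul, hcd' i, sum_tmul]
    rw [hY, map_sum]
    simp only [map_sum, TensorProduct.assoc_tmul, Θtmul]
    refine Finset.sum_congr rfl fun i _ => ?_
    have fuse := W.counit_fuse hr (hcd' i)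
    calc ∑ w, ∑ j ∈ t, W.counit (b j * d' i w) • ((a j * c' i w) ⊗ₜ[k] W.εs (v i))
        = (∑ w, ∑ j ∈ t, W.counit (b j * d' i w) • (a j * c' i w)) ⊗ₜ[k] W.εs (v i) := by
          rw [sum_tmul]
          refine Finset.sum_congr rfl fun w _ => ?_
          rw [sum_tmul]
          refine Finset.sum_congr rfl fun j _ => ?_
          rw [smul_tmul']
      _ = (h * u i) ⊗ₜ[k] W.εs (v i) := by
          rw [Finset.sum_comm, fuse]
  rw [← e1, e2]

end Ident

end WeakBialgebra


namespace WeakHopf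

open WeakBialgebra

variable {k H : Type*} [CommRing k] [Ring H] [Algebra k H] (WH : WeakHopf k H)

section HopfIdent

variable {ι ι' : Type*} {s : Finset ι} {t : Finset ι'} {u v : ι → H} {a b : ι' → H} {h : H}

theorem SconvId_E (hr : WH.W.comul h = ∑ j ∈ t, a j ⊗ₜ[k] b j) :
    ∑ j ∈ t, WH.S (a j) * b j = WH.W.εs h := by
  have := WH.S_conv_id h
  rw [hr] at this
  simpa [map_sum] using this

theorem IdconvS_E (hr : WH.W.comul h = ∑ j ∈ t, a j ⊗ₜ[k] b j) :
    ∑ j ∈ t, a j * WH.S (b j) = WH.W.εt h := by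
  have := WH.id_conv_S h
  rw [hr] at this
  simpa [map_sum] using this

theorem Lgamma_E (hr : WH.W.comul h = ∑ j ∈ t, a j ⊗ₜ[k] b j) :
    ∑ j ∈ t, WH.S (a j) * WH.W.εt (b j) = WH.S h := by
  have ax := WH.S_conv_id_conv_S h
  have h1 : (WH.W.comul.lTensor H) (WH.W.comul h) = ∑ j ∈ t, a j ⊗ₜ[k] WH.W.comul (b j) := by
    rw [hr, map_sum]; simp
  rw [h1, map_sum, map_sum, map_sum] at ax
  rw [← ax]
  refine Finset.sum_congr rfl fun j _ => ?_
  rw [TensorProduct.map_tmul, LinearMap.lTensor_tmul, LinearMap.mul'_apply]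
  congr 1
  have := WH.id_conv_S (b j)
  rw [← this]
  rfl

/-- `∑ S(1₍₁₎y)1₍₂₎ = S(y)`. -/
theorem AM1 (hone : WH.W.comul 1 = ∑ i ∈ s, u i ⊗ₜ[k] v i) (y : H) :
    ∑ i ∈ s, WH.S (u i * y) * v i = WH.S y := by
  obtain ⟨ny, p, q, hpq⟩ := exists_rep2 (WH.W.comul y)
  have i1 := WH.W.I1 hone hpq
  have happ := congrArg (LinearMap.mul' k H ∘ₗ (WH.S.rTensor H)) i1
  simp only [map_sum, LinearMap.coe_comp, Function.comp_apply, LinearMap.rTensor_tmul,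
    LinearMap.mul'_apply] at happ
  rw [← happ]
  exact WH.Lgamma_E hpq

/-- `1₍₁₎ ⊗ εs(1₍₂₎) = 1₍₁₎ ⊗ S(1₍₂₎)`. -/
theorem J2S (hone : WH.W.comul 1 = ∑ i ∈ s, u i ⊗ₜ[k] v i) :
    ∑ i ∈ s, u i ⊗ₜ[k] WH.W.εs (v i) = ∑ i ∈ s, u i ⊗ₜ[k] WH.S (v i) := by
  classical
  choose n c d hcd using fun i : ι => exists_rep2 (WH.W.comul (v i))
  set κ : H ⊗[k] (H ⊗[k] H) →ₗ[k] H ⊗[k] H :=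
    LinearMap.lTensor H ((LinearMap.mul' k H) ∘ₗ (WH.S.rTensor H)) with hκ
  have κtmul : ∀ (x y z : H), κ (x ⊗ₜ[k] (y ⊗ₜ[k] z)) = x ⊗ₜ[k] (WH.S y * z) := by
    intro x y z; simp [hκ]
  have e1 : κ ((WH.W.comul.lTensor H) (WH.W.comul 1)) =
      ∑ i ∈ s, u i ⊗ₜ[k] WH.W.εs (v i) := by
    have hLT : (WH.W.comul.lTensor H) (WH.W.comul 1) =
        ∑ i ∈ s, ∑ w, u i ⊗ₜ[k] (c i w ⊗ₜ[k] d i w) := by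
      rw [hone, map_sum]
      refine Finset.sum_congr rfl fun i _ => ?_
      rw [LinearMap.lTensor_tmul, hcd i, tmul_sum]
    rw [hLT]
    simp only [map_sum, κtmul]
    refine Finset.sum_congr rfl fun i _ => ?_
    rw [← tmul_sum, WH.SconvId_E (hcd i)]
  have e2 : κ ((WH.W.comul.lTensor H) (WH.W.comul 1)) =
      ∑ i ∈ s, u i ⊗ₜ[k] WH.S (v i) := by
    rw [WH.W.WUR_E hone]
    simp only [map_sum, κtmul]
    rw [Finset.sum_comm]
    refine Finset.sum_congr rfl fun p _ => ?_
    rw [← tmul_sum]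
    congr 1
    exact WH.AM1 hone (v p)
  rw [← e1, e2]

/-- `(id ⊗ εs)Δh = ∑ h·1₍₁₎ ⊗ S(1₍₂₎)`. -/
theorem M1 (hone : WH.W.comul 1 = ∑ i ∈ s, u i ⊗ₜ[k] v i)
    (hr : WH.W.comul h = ∑ j ∈ t, a j ⊗ₜ[k] b j) :
    ∑ j ∈ t, a j ⊗ₜ[k] WH.W.εs (b j) = ∑ i ∈ s, (h * u i) ⊗ₜ[k] WH.S (v i) := by
  rw [WH.W.I3 hone hr]
  have := congrArg ((LinearMap.mulLeft k h).rTensor H) (WH.J2S hone)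
  simp only [map_sum, LinearMap.rTensor_tmul, LinearMap.mulLeft_apply] at this
  exact this

end HopfIdent
end WeakHopf


section ModulesAux

variable {k H M : Type*} [CommRing k] [Ring H] [Algebra k H]
  [AddCommGroup M] [Module k M] [Module H M] [IsScalarTower k H M]

@[simp] theorem lsmulM_apply (b : H) (m : M) : lsmulM (k := k) b m = b • m := rfl

/-- The action `H ⊗ M →ₗ M`. -/
noncomputable def actM : H ⊗[k] M →ₗ[k] M := TensorProduct.lift (lsmulL (k := k))

@[simp] theorem actM_tmul (h : H) (m : M) : actM (h ⊗ₜ[k] m) = h • m := rfl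

/-- `ΞB ((a⊗b) ⊗ (x⊗y)) = (a*x) ⊗ (b•y)`. -/
noncomputable def XiB : (H ⊗[k] H) ⊗[k] (H ⊗[k] M) →ₗ[k] H ⊗[k] M :=
  TensorProduct.map (LinearMap.mul' k H) (actM) ∘ₗ
    (TensorProduct.tensorTensorTensorComm k H H H M).toLinearMap

@[simp] theorem XiB_tmul (a b x : H) (y : M) :
    XiB ((a ⊗ₜ[k] b) ⊗ₜ[k] (x ⊗ₜ[k] y)) = (a * x) ⊗ₜ[k] (b • y) := by
  simp [XiB, TensorProduct.tensorTensorTensorComm_tmul, LinearMap.mul'_apply]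

/-- `μ (c ⊗ (x⊗y)) = (x*c) ⊗ y`. -/
noncomputable def muB : H ⊗[k] (H ⊗[k] M) →ₗ[k] H ⊗[k] M :=
  LinearMap.rTensor M ((LinearMap.mul' k H) ∘ₗ (TensorProduct.comm k H H).toLinearMap) ∘ₗ
    (TensorProduct.assoc k H H M).symm.toLinearMap

@[simp] theorem muB_tmul (c x : H) (y : M) :
    muB (c ⊗ₜ[k] (x ⊗ₜ[k] y)) = (x * c) ⊗ₜ[k] y := by
  simp [muB, LinearMap.mul'_apply]

/-- `ΩB (((a⊗b)⊗c) ⊗ (x⊗y)) = (a*(x*c)) ⊗ (b•y)`. -/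
noncomputable def OmB : ((H ⊗[k] H) ⊗[k] H) ⊗[k] (H ⊗[k] M) →ₗ[k] H ⊗[k] M :=
  XiB ∘ₗ LinearMap.lTensor (H ⊗[k] H) muB ∘ₗ
    (TensorProduct.assoc k (H ⊗[k] H) H (H ⊗[k] M)).toLinearMap

@[simp] theorem OmB_tmul (a b c x : H) (y : M) :
    OmB (((a ⊗ₜ[k] b) ⊗ₜ[k] c) ⊗ₜ[k] (x ⊗ₜ[k] y)) = (a * (x * c)) ⊗ₜ[k] (b • y) := by
  simp [OmB]

end ModulesAux


section Modules2

variable {k H M : Type*} [CommRing k] [Ring H] [Algebra k H]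
  [AddCommGroup M] [Module k M] [Module H M] [IsScalarTower k H M]

/-- `νB ((x⊗y) ⊗ b) = (x*b) ⊗ y`. -/
noncomputable def nuB : (H ⊗[k] M) ⊗[k] H →ₗ[k] H ⊗[k] M :=
  LinearMap.rTensor M (LinearMap.mul' k H) ∘ₗ
    (TensorProduct.assoc k H H M).symm.toLinearMap ∘ₗ
    LinearMap.lTensor H (TensorProduct.comm k M H).toLinearMap ∘ₗ
    (TensorProduct.assoc k H M H).toLinearMap

@[simp] theorem nuB_tmul (x : H) (y : M) (b : H) :
    nuB ((x ⊗ₜ[k] y) ⊗ₜ[k] b) = (x * b) ⊗ₜ[k] y := by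
  simp [nuB, LinearMap.mul'_apply]

theorem nuB_eq (z : H ⊗[k] M) (b : H) :
    nuB (z ⊗ₜ[k] b) = (LinearMap.mulRight k b).rTensor M z := by
  induction z with
  | zero => simp
  | tmul x y => simp
  | add z₁ z₂ h1 h2 => rw [add_tmul, map_add, h1, h2, map_add]

variable (lam : M →ₗ[k] H ⊗[k] M)

/-- `ΘB ((a⊗b) ⊗ m) = rT(mulRight b)(lam (a•m))`. -/
noncomputable def ThB : (H ⊗[k] H) ⊗[k] M →ₗ[k] H ⊗[k] M :=
  nuB ∘ₗ LinearMap.rTensor H (lam ∘ₗ actM) ∘ₗ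
    (TensorProduct.assoc k H M H).symm.toLinearMap ∘ₗ
    LinearMap.lTensor H (TensorProduct.comm k H M).toLinearMap ∘ₗ
    (TensorProduct.assoc k H H M).toLinearMap

theorem ThB_tmul (a b : H) (m : M) :
    ThB lam ((a ⊗ₜ[k] b) ⊗ₜ[k] m) =
      (LinearMap.mulRight k b).rTensor M (lam (a • m)) := by
  simp only [ThB, LinearMap.coe_comp, Function.comp_apply, LinearEquiv.coe_coe,
    TensorProduct.assoc_tmul, LinearMap.lTensor_tmul, TensorProduct.comm_tmul,
    TensorProduct.assoc_symm_tmul, LinearMap.rTensor_tmul, actM_tmul]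
  exact nuB_eq _ _

variable (S : H →ₗ[k] H)

/-- `ΛB (((x⊗y)⊗z) ⊗ m) = rT(mulRight (y * S z))(lam (x•m))`. -/
noncomputable def LaB : ((H ⊗[k] H) ⊗[k] H) ⊗[k] M →ₗ[k] H ⊗[k] M :=
  ThB lam ∘ₗ LinearMap.rTensor M
    (LinearMap.lTensor H ((LinearMap.mul' k H) ∘ₗ (LinearMap.lTensor H S)) ∘ₗ
      (TensorProduct.assoc k H H H).toLinearMap)

theorem LaB_tmul (x y z : H) (m : M) :
    LaB lam S (((x ⊗ₜ[k] y) ⊗ₜ[k] z) ⊗ₜ[k] m) =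
      (LinearMap.mulRight k (y * S z)).rTensor M (lam (x • m)) := by
  simp only [LaB, LinearMap.coe_comp, Function.comp_apply, LinearMap.rTensor_tmul,
    LinearEquiv.coe_coe, TensorProduct.assoc_tmul, LinearMap.lTensor_tmul,
    LinearMap.mul'_apply]
  exact ThB_tmul lam _ _ _

theorem mapmul_eq_XiB (a b : H) (z : H ⊗[k] M) :
    (TensorProduct.map (LinearMap.mulLeft k a) (lsmulM b)) z = XiB ((a ⊗ₜ[k] b) ⊗ₜ[k] z) := by
  induction z with
  | zero => simp
  | tmul x y => simp
  | add z₁ z₂ h1 h2 => rw [map_add, h1, h2, tmul_add, map_add]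

theorem mapOm_eq_OmB (a b c : H) (z : H ⊗[k] M) :
    (TensorProduct.map (LinearMap.mulLeft k a ∘ₗ LinearMap.mulRight k c) (lsmulM b)) z =
      OmB (((a ⊗ₜ[k] b) ⊗ₜ[k] c) ⊗ₜ[k] z) := by
  induction z with
  | zero => simp
  | tmul x y => simp
  | add z₁ z₂ h1 h2 => rw [map_add, h1, h2, tmul_add, map_add]

theorem XiB_mul (X Y : H ⊗[k] H) (z : H ⊗[k] M) :
    XiB (X ⊗ₜ[k] XiB (Y ⊗ₜ[k] z)) = XiB ((X * Y) ⊗ₜ[k] z) := by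
  induction Y with
  | zero => simp [tmul_zero]
  | add Y₁ Y₂ h1 h2 => simp only [add_tmul, tmul_add, map_add, mul_add, h1, h2]
  | tmul a' b' =>
    induction z with
    | zero => simp [tmul_zero]
    | add z₁ z₂ h1 h2 => simp only [add_tmul, tmul_add, map_add, h1, h2]
    | tmul x y =>
      induction X with
      | zero => simp [zero_tmul]
      | add X₁ X₂ h1 h2 => simp only [add_tmul, tmul_add, map_add, add_mul, h1, h2]
      | tmul a b =>
        rw [XiB_tmul, XiB_tmul, Algebra.TensorProduct.tmul_mul_tmul, XiB_tmul,
          mul_assoc, mul_smul]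

theorem DRESS (X : H ⊗[k] H) (Y : (H ⊗[k] H) ⊗[k] H) (z : H ⊗[k] M) :
    XiB (X ⊗ₜ[k] OmB (Y ⊗ₜ[k] z)) =
      OmB ((((LinearMap.mulLeft k X).rTensor H) Y) ⊗ₜ[k] z) := by
  induction Y with
  | zero => simp [tmul_zero]
  | add Y₁ Y₂ h1 h2 => simp only [add_tmul, tmul_add, map_add, h1, h2]
  | tmul W c =>
    induction W with
    | zero => simp [zero_tmul, tmul_zero]
    | add W₁ W₂ h1 h2 => simp only [add_tmul, tmul_add, map_add, h1, h2]
    | tmul a' b' =>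
      induction z with
      | zero => simp [tmul_zero]
      | add z₁ z₂ h1 h2 => simp only [add_tmul, tmul_add, map_add, h1, h2]
      | tmul x y =>
        induction X with
        | zero => simp [zero_tmul]
        | add X₁ X₂ h1 h2 => simp only [add_tmul, tmul_add, map_add, h1, h2,
            LinearMap.rTensor_tmul, LinearMap.mulLeft_apply, add_mul]
        | tmul a b =>
          rw [OmB_tmul, XiB_tmul, LinearMap.rTensor_tmul, LinearMap.mulLeft_apply,
            Algebra.TensorProduct.tmul_mul_tmul, OmB_tmul, mul_assoc, mul_smul]

theorem DRESSR (d : H) (Y : (H ⊗[k] H) ⊗[k] H) (z : H ⊗[k] M) :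
    (LinearMap.mulRight k d).rTensor M (OmB (Y ⊗ₜ[k] z)) =
      OmB (((LinearMap.lTensor (H ⊗[k] H) (LinearMap.mulRight k d)) Y) ⊗ₜ[k] z) := by
  induction Y with
  | zero => simp [tmul_zero]
  | add Y₁ Y₂ h1 h2 => simp only [add_tmul, tmul_add, map_add, h1, h2]
  | tmul W c =>
    induction W with
    | zero => simp [zero_tmul, tmul_zero]
    | add W₁ W₂ h1 h2 => simp only [add_tmul, tmul_add, map_add, h1, h2]
    | tmul a' b' =>
      induction z with
      | zero => simp [tmul_zero]
      | add z₁ z₂ h1 h2 => simp only [add_tmul, tmul_add, map_add, h1, h2]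
      | tmul x y =>
        simp only [OmB_tmul, LinearMap.rTensor_tmul, LinearMap.lTensor_tmul,
          LinearMap.mulRight_apply, mul_assoc]

theorem FACT (a b b' c : H) (z : H ⊗[k] M) :
    OmB (((a ⊗ₜ[k] (b * b')) ⊗ₜ[k] c) ⊗ₜ[k] z) =
      (TensorProduct.map (LinearMap.mulLeft k a) (lsmulM b))
        ((TensorProduct.map (LinearMap.mulRight k c) (lsmulM b')) z) := by
  induction z with
  | zero => simp [tmul_zero]
  | add z₁ z₂ h1 h2 => rw [tmul_add, map_add, h1, h2, map_add, map_add]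
  | tmul x y => simp [mul_smul]

theorem rT_mulRight_sum {γ : Type*} (t : Finset γ) (e : γ → H) (z : H ⊗[k] M) :
    ∑ w ∈ t, (LinearMap.mulRight k (e w)).rTensor M z =
      (LinearMap.mulRight k (∑ w ∈ t, e w)).rTensor M z := by
  induction z with
  | zero => simp
  | tmul x y => simp [Finset.mul_sum, sum_tmul]
  | add z₁ z₂ h1 h2 =>
    simp only [map_add, Finset.sum_add_distrib, h1, h2]

end Modules2


section Main

variable {k H M : Type*} [CommRing k] [Ring H] [Algebra k H]
  [AddCommGroup M] [Module k M] [Module H M] [IsScalarTower k H M]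

theorem OMFACT (X : H ⊗[k] H) (c : H) (z : H ⊗[k] M) :
    OmB ((X ⊗ₜ[k] c) ⊗ₜ[k] z) = (LinearMap.mulRight k c).rTensor M (XiB (X ⊗ₜ[k] z)) := by
  induction X with
  | zero => simp [zero_tmul]
  | add X₁ X₂ h1 h2 => simp only [add_tmul, map_add, h1, h2]
  | tmul a b =>
    induction z with
    | zero => simp [tmul_zero]
    | add z₁ z₂ h1 h2 => simp only [add_tmul, tmul_add, map_add, h1, h2]
    | tmul x y => simp [mul_assoc]

variable (WH : WeakHopf k H) (lam : M →ₗ[k] H ⊗[k] M)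
  {ι : Type*} (s : Finset ι) (u v : ι → H)

/-- canonical form of condition (B). -/
def BCAN : Prop := ∀ (h : H) (m : M), lam (h • m) =
  OmB (((LinearMap.lTensor (H ⊗[k] H) WH.S) ((WH.W.comul.rTensor H) (WH.W.comul h)))
    ⊗ₜ[k] lam m)

/-- canonical form of the YD compatibility (A2). -/
def A2CAN : Prop := ∀ (h : H) (m : M),
  XiB ((WH.W.comul h) ⊗ₜ[k] lam m) = ThB lam ((WH.W.comul h) ⊗ₜ[k] m)

theorem E_apply_XiB (hone : WH.W.comul 1 = ∑ i ∈ s, u i ⊗ₜ[k] v i) (z : H ⊗[k] M) :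
    (∑ i ∈ s, TensorProduct.map (LinearMap.mulLeft k (u i)) (lsmulM (v i))) z =
      XiB ((WH.W.comul 1) ⊗ₜ[k] z) := by
  rw [hone, LinearMap.sum_apply, sum_tmul, map_sum]
  exact Finset.sum_congr rfl fun i _ => mapmul_eq_XiB _ _ _

theorem E_idem (hone : WH.W.comul 1 = ∑ i ∈ s, u i ⊗ₜ[k] v i) (z : H ⊗[k] M) :
    (∑ i ∈ s, TensorProduct.map (LinearMap.mulLeft k (u i)) (lsmulM (v i)))
      ((∑ i ∈ s, TensorProduct.map (LinearMap.mulLeft k (u i)) (lsmulM (v i))) z) =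
    (∑ i ∈ s, TensorProduct.map (LinearMap.mulLeft k (u i)) (lsmulM (v i))) z := by
  have h1 := E_apply_XiB WH s u v hone z
  have h2 := E_apply_XiB WH s u v hone (XiB ((WH.W.comul 1) ⊗ₜ[k] z))
  rw [h1, h2, XiB_mul]
  congr 2
  rw [← WH.W.comul_mul, mul_one]

/-- Direction B ⇒ A1. -/
theorem a1OfB (hone : WH.W.comul 1 = ∑ i ∈ s, u i ⊗ₜ[k] v i) (hB : BCAN WH lam) (m : M) :
    lam m ∈ LinearMap.range
      (∑ i ∈ s, TensorProduct.map (LinearMap.mulLeft k (u i)) (lsmulM (v i))) := by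
  classical
  have hm : lam m = OmB (((LinearMap.lTensor (H ⊗[k] H) WH.S)
      ((WH.W.comul.rTensor H) (WH.W.comul 1))) ⊗ₜ[k] lam m) := by
    have := hB 1 m; rwa [one_smul] at this
  rw [WH.W.C3L hone] at hm
  refine ⟨(∑ p ∈ s, TensorProduct.map (LinearMap.mulRight k (WH.S (v p)))
      (lsmulM (u p))) (lam m), ?_⟩
  calc (∑ i ∈ s, (TensorProduct.map (LinearMap.mulLeft k (u i)) (lsmulM (v i))))
        ((∑ p ∈ s, (TensorProduct.map (LinearMap.mulRight k (WH.S (v p)))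
          (lsmulM (u p)))) (lam m))
      = ∑ i ∈ s, ∑ p ∈ s, (TensorProduct.map (LinearMap.mulLeft k (u i)) (lsmulM (v i)))
          ((TensorProduct.map (LinearMap.mulRight k (WH.S (v p))) (lsmulM (u p)))
            (lam m)) := by
        rw [LinearMap.sum_apply]
        refine Finset.sum_congr rfl fun i _ => ?_
        rw [LinearMap.sum_apply, map_sum]
    _ = lam m := by
        have hEE : OmB (((LinearMap.lTensor (H ⊗[k] H) WH.S)
            (∑ i ∈ s, ∑ j ∈ s, (u i ⊗ₜ[k] (v i * u j)) ⊗ₜ[k] v j)) ⊗ₜ[k] lam m) =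
            ∑ i ∈ s, ∑ p ∈ s, (TensorProduct.map (LinearMap.mulLeft k (u i))
              (lsmulM (v i))) ((TensorProduct.map (LinearMap.mulRight k (WH.S (v p)))
                (lsmulM (u p))) (lam m)) := by
          rw [map_sum, sum_tmul, map_sum]
          refine Finset.sum_congr rfl fun i _ => ?_
          rw [map_sum, sum_tmul, map_sum]
          refine Finset.sum_congr rfl fun p _ => ?_
          rw [LinearMap.lTensor_tmul, FACT]
        exact hEE.symm.trans hm.symm

/-- Direction B ⇒ A2 (canonical form). -/
theorem a2canOfB (hone : WH.W.comul 1 = ∑ i ∈ s, u i ⊗ₜ[k] v i) (hB : BCAN WH lam) :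
    A2CAN WH lam := by
  classical
  intro h m
  obtain ⟨n, a, b, hr⟩ := exists_rep2 (WH.W.comul h)
  choose nc c d hcd using fun j : Fin n => exists_rep2 (WH.W.comul (a j))
  -- the common element V
  set V : (H ⊗[k] H) ⊗[k] H := ∑ j, WH.W.comul (a j) ⊗ₜ[k] WH.W.εs (b j) with hV
  -- LHS chain
  have hP : lam m = OmB (((LinearMap.lTensor (H ⊗[k] H) WH.S)
      ((WH.W.comul.rTensor H) (WH.W.comul 1))) ⊗ₜ[k] lam m) := by
    have := hB 1 m; rwa [one_smul] at this
  have hPcS : (LinearMap.lTensor (H ⊗[k] H) WH.S)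
      ((WH.W.comul.rTensor H) (WH.W.comul 1)) =
      ∑ i ∈ s, WH.W.comul (u i) ⊗ₜ[k] WH.S (v i) := by
    rw [hone, map_sum, map_sum]
    simp
  have hdress : (LinearMap.mulLeft k (WH.W.comul h)).rTensor H
      (∑ i ∈ s, WH.W.comul (u i) ⊗ₜ[k] WH.S (v i)) = V := by
    rw [map_sum]
    have e1 : ∑ i ∈ s, (LinearMap.mulLeft k (WH.W.comul h)).rTensor H
        (WH.W.comul (u i) ⊗ₜ[k] WH.S (v i)) =
        ∑ i ∈ s, WH.W.comul (h * u i) ⊗ₜ[k] WH.S (v i) := by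
      refine Finset.sum_congr rfl fun i _ => ?_
      rw [LinearMap.rTensor_tmul, LinearMap.mulLeft_apply, ← WH.W.comul_mul]
    rw [e1, hV]
    have m1 := (WH.M1 hone hr).symm
    have := congrArg (WH.W.comul.rTensor H) m1
    rw [map_sum, map_sum] at this
    simpa using this
  have hLHS : XiB ((WH.W.comul h) ⊗ₜ[k] lam m) = OmB (V ⊗ₜ[k] lam m) := by
    conv_lhs => rw [hP]
    rw [hPcS, DRESS, hdress]
  -- RHS chain
  have hD3E : ∑ j, ∑ r, WH.W.comul (c j r) ⊗ₜ[k] (d j r ⊗ₜ[k] b j) =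
      ∑ j, WH.W.comul (a j) ⊗ₜ[k] WH.W.comul (b j) := by
    set κ₂ : (H ⊗[k] H) ⊗[k] H →ₗ[k] (H ⊗[k] H) ⊗[k] (H ⊗[k] H) :=
      (WH.W.comul.rTensor (H ⊗[k] H)) ∘ₗ (TensorProduct.assoc k H H H).toLinearMap with hκ₂
    have e1 : κ₂ ((WH.W.comul.rTensor H) (WH.W.comul h)) =
        ∑ j, ∑ r, WH.W.comul (c j r) ⊗ₜ[k] (d j r ⊗ₜ[k] b j) := by
      rw [hr, map_sum, map_sum]
      refine Finset.sum_congr rfl fun j _ => ?_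
      rw [LinearMap.rTensor_tmul, hcd j, sum_tmul, map_sum]
      refine Finset.sum_congr rfl fun r _ => ?_
      simp [hκ₂]
    have e2 : κ₂ ((WH.W.comul.rTensor H) (WH.W.comul h)) =
        ∑ j, WH.W.comul (a j) ⊗ₜ[k] WH.W.comul (b j) := by
      rw [hκ₂]
      simp only [LinearMap.coe_comp, Function.comp_apply, LinearEquiv.coe_coe]
      rw [WH.W.coassoc h]
      have : (WH.W.comul.lTensor H) (WH.W.comul h) =
          ∑ j, a j ⊗ₜ[k] WH.W.comul (b j) := by
        rw [hr, map_sum]; simp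
      rw [this, map_sum]
      simp
    rw [← e1, e2]
  have hFUSE : ∑ j, ∑ r, WH.W.comul (c j r) ⊗ₜ[k] (WH.S (d j r) * b j) = V := by
    have := congrArg (LinearMap.lTensor (H ⊗[k] H)
      ((LinearMap.mul' k H) ∘ₗ (WH.S.rTensor H))) hD3E
    rw [map_sum, map_sum] at this
    calc ∑ j, ∑ r, WH.W.comul (c j r) ⊗ₜ[k] (WH.S (d j r) * b j)
        = ∑ j, (LinearMap.lTensor (H ⊗[k] H) ((LinearMap.mul' k H) ∘ₗ (WH.S.rTensor H)))
            (∑ r, WH.W.comul (c j r) ⊗ₜ[k] (d j r ⊗ₜ[k] b j)) := by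
          refine Finset.sum_congr rfl fun j _ => ?_
          rw [map_sum]
          refine Finset.sum_congr rfl fun r _ => ?_
          simp [LinearMap.mul'_apply]
      _ = ∑ j, (LinearMap.lTensor (H ⊗[k] H) ((LinearMap.mul' k H) ∘ₗ (WH.S.rTensor H)))
            (WH.W.comul (a j) ⊗ₜ[k] WH.W.comul (b j)) := this
      _ = V := by
          rw [hV]
          refine Finset.sum_congr rfl fun j _ => ?_
          rw [LinearMap.lTensor_tmul, LinearMap.comp_apply]
          congr 1
          exact WH.S_conv_id (b j)
  have hRHS : ThB lam ((WH.W.comul h) ⊗ₜ[k] m) = OmB (V ⊗ₜ[k] lam m) := by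
    rw [hr, sum_tmul, map_sum]
    calc ∑ j, ThB lam ((a j ⊗ₜ[k] b j) ⊗ₜ[k] m)
        = ∑ j, (LinearMap.mulRight k (b j)).rTensor M (lam (a j • m)) := by
          exact Finset.sum_congr rfl fun j _ => ThB_tmul lam _ _ _
      _ = ∑ j, (LinearMap.mulRight k (b j)).rTensor M
            (OmB (((LinearMap.lTensor (H ⊗[k] H) WH.S)
              ((WH.W.comul.rTensor H) (WH.W.comul (a j)))) ⊗ₜ[k] lam m)) := by
          exact Finset.sum_congr rfl fun j _ => by rw [← hB (a j) m]
      _ = ∑ j, OmB (((LinearMap.lTensor (H ⊗[k] H) (LinearMap.mulRight k (b j)))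
            ((LinearMap.lTensor (H ⊗[k] H) WH.S)
              ((WH.W.comul.rTensor H) (WH.W.comul (a j))))) ⊗ₜ[k] lam m) := by
          exact Finset.sum_congr rfl fun j _ => DRESSR _ _ _
      _ = ∑ j, ∑ r, OmB ((WH.W.comul (c j r) ⊗ₜ[k] (WH.S (d j r) * b j)) ⊗ₜ[k] lam m) := by
          refine Finset.sum_congr rfl fun j _ => ?_
          rw [hcd j]
          simp only [map_sum, sum_tmul]
          refine Finset.sum_congr rfl fun r _ => ?_
          simp
      _ = OmB (V ⊗ₜ[k] lam m) := by
          rw [← hFUSE, sum_tmul, map_sum]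
          refine Finset.sum_congr rfl fun j _ => ?_
          rw [sum_tmul, map_sum]
  rw [hLHS, hRHS]


/-- Direction A1 ∧ A2 ⇒ B (canonical form). -/
theorem bcanOfA (hone : WH.W.comul 1 = ∑ i ∈ s, u i ⊗ₜ[k] v i)
    (hA1 : ∀ m : M, lam m ∈ LinearMap.range
      (∑ i ∈ s, TensorProduct.map (LinearMap.mulLeft k (u i)) (lsmulM (v i))))
    (hA2 : A2CAN WH lam) : BCAN WH lam := by
  classical
  intro h m
  obtain ⟨n, a, b, hr⟩ := exists_rep2 (WH.W.comul h)
  choose nc c d hcd using fun j : Fin n => exists_rep2 (WH.W.comul (a j))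
  choose nb c' d' hcd' using fun j : Fin n => exists_rep2 (WH.W.comul (b j))
  symm
  have step1 : OmB (((LinearMap.lTensor (H ⊗[k] H) WH.S)
      ((WH.W.comul.rTensor H) (WH.W.comul h))) ⊗ₜ[k] lam m) =
      ∑ j, (LinearMap.mulRight k (WH.S (b j))).rTensor M
        (ThB lam ((WH.W.comul (a j)) ⊗ₜ[k] m)) := by
    rw [hr]
    simp only [map_sum, sum_tmul]
    refine Finset.sum_congr rfl fun j _ => ?_
    rw [LinearMap.rTensor_tmul, LinearMap.lTensor_tmul, OMFACT, hA2 (a j) m]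
  have step2 : ∀ j, (LinearMap.mulRight k (WH.S (b j))).rTensor M
      (ThB lam ((WH.W.comul (a j)) ⊗ₜ[k] m)) =
      ∑ r, (LinearMap.mulRight k (d j r * WH.S (b j))).rTensor M (lam (c j r • m)) := by
    intro j
    rw [hcd j, sum_tmul, map_sum, map_sum]
    refine Finset.sum_congr rfl fun r _ => ?_
    rw [ThB_tmul, LinearMap.mulRight_mul, LinearMap.rTensor_comp, LinearMap.comp_apply]
  have hYrep : (WH.W.comul.rTensor H) (WH.W.comul h) =
      ∑ j, ∑ r, (c j r ⊗ₜ[k] d j r) ⊗ₜ[k] b j := by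
    rw [hr, map_sum]
    refine Finset.sum_congr rfl fun j _ => ?_
    rw [LinearMap.rTensor_tmul, hcd j, sum_tmul]
  have hYrep2 : (WH.W.comul.rTensor H) (WH.W.comul h) =
      ∑ j, ∑ w, (a j ⊗ₜ[k] c' j w) ⊗ₜ[k] d' j w := by
    have h0 : (WH.W.comul.rTensor H) (WH.W.comul h) =
        ∑ j, (WH.W.comul (a j)) ⊗ₜ[k] b j := by
      rw [hr, map_sum]; simp
    rw [h0]
    exact WH.W.coassoc_E hr (fun j _ => hcd' j)
  have step3 : ∑ j, ∑ r, (LinearMap.mulRight k (d j r * WH.S (b j))).rTensor M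
      (lam (c j r • m)) = LaB lam WH.S (((WH.W.comul.rTensor H) (WH.W.comul h)) ⊗ₜ[k] m) := by
    rw [hYrep]
    simp only [sum_tmul, map_sum]
    refine Finset.sum_congr rfl fun j _ => Finset.sum_congr rfl fun r _ => ?_
    rw [LaB_tmul]
  have step4 : LaB lam WH.S (((WH.W.comul.rTensor H) (WH.W.comul h)) ⊗ₜ[k] m) =
      ∑ j, (LinearMap.mulRight k (WH.W.εt (b j))).rTensor M (lam (a j • m)) := by
    rw [hYrep2]
    simp only [sum_tmul, map_sum]
    refine Finset.sum_congr rfl fun j _ => ?_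
    calc ∑ w, LaB lam WH.S (((a j ⊗ₜ[k] c' j w) ⊗ₜ[k] d' j w) ⊗ₜ[k] m)
        = ∑ w, (LinearMap.mulRight k (c' j w * WH.S (d' j w))).rTensor M
            (lam (a j • m)) := by
          exact Finset.sum_congr rfl fun w _ => LaB_tmul lam WH.S _ _ _ _
      _ = (LinearMap.mulRight k (∑ w, c' j w * WH.S (d' j w))).rTensor M
            (lam (a j • m)) := rT_mulRight_sum _ _ _
      _ = (LinearMap.mulRight k (WH.W.εt (b j))).rTensor M (lam (a j • m)) := by
          rw [WH.IdconvS_E (hcd' j)]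
  have step5 : ∑ j, (LinearMap.mulRight k (WH.W.εt (b j))).rTensor M (lam (a j • m)) =
      ThB lam ((WH.W.comul 1) ⊗ₜ[k] (h • m)) := by
    calc ∑ j, (LinearMap.mulRight k (WH.W.εt (b j))).rTensor M (lam (a j • m))
        = ThB lam ((∑ j, a j ⊗ₜ[k] WH.W.εt (b j)) ⊗ₜ[k] m) := by
          rw [sum_tmul, map_sum]
          exact (Finset.sum_congr rfl fun j _ => ThB_tmul lam _ _ _).symm
      _ = ThB lam ((∑ i ∈ s, (u i * h) ⊗ₜ[k] v i) ⊗ₜ[k] m) := by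
          rw [WH.W.I1 hone hr]
      _ = ThB lam ((WH.W.comul 1) ⊗ₜ[k] (h • m)) := by
          rw [hone, sum_tmul, map_sum, sum_tmul, map_sum]
          refine Finset.sum_congr rfl fun i _ => ?_
          rw [ThB_tmul, ThB_tmul, mul_smul]
  have step6 : ThB lam ((WH.W.comul 1) ⊗ₜ[k] (h • m)) = lam (h • m) := by
    rw [← hA2 1 (h • m), ← E_apply_XiB WH s u v hone]
    obtain ⟨w, hw⟩ := hA1 (h • m)
    rw [← hw, E_idem WH s u v hone, hw]
  rw [step1]
  rw [Finset.sum_congr rfl fun j _ => step2 j]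
  rw [step3, step4, step5, step6]

end Main


/-- Let `H` be a weak Hopf algebra and `M` a left `H`-module with a coassociative
counital left `H`-coaction `lam`.  Then `M` is a left-left Yetter-Drinfeld module
(`λ(m) ∈ Δ(1)(H ⊗ M)` and `h₍₁₎m₍₋₁₎ ⊗ h₍₂₎m₍₀₎ = (h₍₁₎m)₍₋₁₎h₍₂₎ ⊗ (h₍₁₎m)₍₀₎`)
iff `λ(hm) = h₍₁₎m₍₋₁₎S(h₍₃₎) ⊗ h₍₂₎m₍₀₎` for all `h, m`.
Sweedler components are encoded by quantifying over finite representations of the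
(iterated) comultiplication. -/
theorem weakHopf_yetterDrinfeld_iff
    {k H M : Type*} [CommRing k] [Ring H] [Algebra k H]
    [AddCommGroup M] [Module k M] [Module H M] [IsScalarTower k H M]
    (WH : WeakHopf k H) (lam : M →ₗ[k] H ⊗[k] M)
    (hcoassoc : ∀ m : M, (TensorProduct.assoc k H H M) ((WH.W.comul.rTensor M) (lam m)) =
      (lam.lTensor H) (lam m))
    (hcounit : ∀ m : M, (TensorProduct.lid k M) ((WH.W.counit.rTensor M) (lam m)) = m)
    {ι : Type*} (s : Finset ι) (u v : ι → H)
    (hone : WH.W.comul 1 = ∑ i ∈ s, u i ⊗ₜ[k] v i) :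
    ((∀ m : M, lam m ∈ LinearMap.range
        (∑ i ∈ s, TensorProduct.map (LinearMap.mulLeft k (u i)) (lsmulM (v i)))) ∧
     (∀ (h : H) (m : M) (κ : Type) (t : Finset κ) (a b : κ → H),
        WH.W.comul h = ∑ i ∈ t, a i ⊗ₜ[k] b i →
        ∑ i ∈ t, (TensorProduct.map (LinearMap.mulLeft k (a i)) (lsmulM (b i))) (lam m) =
          ∑ i ∈ t, (LinearMap.rTensor M (LinearMap.mulRight k (b i))) (lam (a i • m)))) ↔
    (∀ (h : H) (m : M) (κ : Type) (t : Finset κ) (a b c : κ → H),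
        (WH.W.comul.rTensor H) (WH.W.comul h) = ∑ i ∈ t, (a i ⊗ₜ[k] b i) ⊗ₜ[k] c i →
        lam (h • m) = ∑ i ∈ t, (TensorProduct.map
          (LinearMap.mulLeft k (a i) ∘ₗ LinearMap.mulRight k (WH.S (c i)))
          (lsmulM (b i))) (lam m)) := by
  constructor
  · rintro ⟨hA1, hA2⟩
    have hA2c : A2CAN WH lam := by
      intro g m
      obtain ⟨n, a, b, hr⟩ := exists_rep2 (WH.W.comul g)
      have key := hA2 g m (Fin n) Finset.univ a b hr
      calc XiB ((WH.W.comul g) ⊗ₜ[k] lam m)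
          = ∑ i, (TensorProduct.map (LinearMap.mulLeft k (a i)) (lsmulM (b i)))
              (lam m) := by
            rw [hr, sum_tmul, map_sum]
            refine Finset.sum_congr rfl fun i _ => ?_
            rw [← mapmul_eq_XiB (a i) (b i) (lam m)]
        _ = ∑ i, (LinearMap.rTensor M (LinearMap.mulRight k (b i))) (lam (a i • m)) := key
        _ = ThB lam ((WH.W.comul g) ⊗ₜ[k] m) := by
            rw [hr, sum_tmul, map_sum]
            refine Finset.sum_congr rfl fun i _ => ?_
            rw [ThB_tmul lam (a i) (b i) m]
    have hB := bcanOfA WH lam s u v hone hA1 hA2c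
    intro g m κ t a b c hrep
    rw [hB g m, hrep]
    simp only [map_sum, sum_tmul]
    refine Finset.sum_congr rfl fun i _ => ?_
    rw [LinearMap.lTensor_tmul]
    exact (mapOm_eq_OmB (a i) (b i) (WH.S (c i)) (lam m)).symm
  · intro hB'
    have hB : BCAN WH lam := by
      intro g m
      obtain ⟨n, a, b, c, hrep⟩ := exists_rep3 ((WH.W.comul.rTensor H) (WH.W.comul g))
      rw [hB' g m (Fin n) Finset.univ a b c hrep, hrep]
      simp only [map_sum, sum_tmul]
      refine Finset.sum_congr rfl fun i _ => ?_
      rw [LinearMap.lTensor_tmul]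
      exact mapOm_eq_OmB (a i) (b i) (WH.S (c i)) (lam m)
    refine ⟨fun m => a1OfB WH lam s u v hone hB m, ?_⟩
    intro g m κ t a b hrep
    have hA2c := a2canOfB WH lam s u v hone hB
    have e1 : ∑ i ∈ t, (TensorProduct.map (LinearMap.mulLeft k (a i)) (lsmulM (b i)))
        (lam m) = XiB ((WH.W.comul g) ⊗ₜ[k] lam m) := by
      rw [hrep, sum_tmul, map_sum]
      refine Finset.sum_congr rfl fun i _ => ?_
      rw [mapmul_eq_XiB (a i) (b i) (lam m)]
    have e2 : ∑ i ∈ t, (LinearMap.rTensor M (LinearMap.mulRight k (b i))) (lam (a i • m)) =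
        ThB lam ((WH.W.comul g) ⊗ₜ[k] m) := by
      rw [hrep, sum_tmul, map_sum]
      refine Finset.sum_congr rfl fun i _ => ?_
      rw [ThB_tmul lam (a i) (b i) m]
    rw [e1, e2, hA2c g m]
end
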